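/- Assume (D1) and that (1/n)Σ_{i=1}^n ‖Dh(X_i)‖₂² κ₁(X_i) ≤ 1 + E[‖Dh(X)‖₂²κ₁(X)]. Then for every ζ ∈ ℝ^d: |L_n(ζ)| ≤ (‖Σ‖₂² ‖ζ‖₂³ / 8)(1 + E[‖Dh(X)‖₂²κ₁(X)]) and ‖∇L_n(ζ)‖₂ ≤ (3‖Σ‖₂² ‖ζ‖₂² / 8)(1 + E[‖Dh(X)‖₂²κ₁(X)]). -/

import Mathlib

open MeasureTheory Matrix Filter ProbabilityTheory
open scoped BigOperators ENNReal NNReal Topology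

noncomputable section

/-- The Euclidean norm `‖v‖₂` of a vector `v ∈ ℝ^k`. -/
def enorm2 {k : ℕ} (v : Fin k → ℝ) : ℝ := Real.sqrt (∑ i, v i ^ 2)

/-- The operator norm `‖A‖₂` of a matrix with respect to Euclidean norms. -/
def opNorm2 {a b : ℕ} (A : Matrix (Fin a) (Fin b) ℝ) : ℝ :=
  sSup {r : ℝ | ∃ v : Fin b → ℝ, enorm2 v = 1 ∧ r = enorm2 (A.mulVec v)}

/-- The smallest eigenvalue `σ_min(A)` of a symmetric matrix, realized as the minimum of the
quadratic form over the unit sphere. -/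
def sigmaMin {k : ℕ} (A : Matrix (Fin k) (Fin k) ℝ) : ℝ :=
  sInf {r : ℝ | ∃ v : Fin k → ℝ, enorm2 v = 1 ∧ r = v ⬝ᵥ A.mulVec v}

/-- The squared Mahalanobis norm `‖v‖_Σ² = vᵀ Σ⁻¹ v`. -/
def mahal {m : ℕ} (S : Matrix (Fin m) (Fin m) ℝ) (v : Fin m → ℝ) : ℝ :=
  v ⬝ᵥ (S⁻¹).mulVec v

/-- The Jacobian matrix `Dh(x) ∈ ℝ^{d×m}` of `h : ℝ^m → ℝ^d` at `x`. -/
def jac {m d : ℕ} (h : (Fin m → ℝ) → (Fin d → ℝ)) (x : Fin m → ℝ) : Matrix (Fin d) (Fin m) ℝ :=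
  Matrix.of fun β γ => fderiv ℝ h x (Pi.single γ 1) β

/-- The Hessian matrix `D²h^β(x) ∈ ℝ^{m×m}` of the `β`-th component of `h` at `x`. -/
def hess {m d : ℕ} (h : (Fin m → ℝ) → (Fin d → ℝ)) (β : Fin d) (x : Fin m → ℝ) :
    Matrix (Fin m) (Fin m) ℝ :=
  Matrix.of fun i j =>
    fderiv ℝ (fun y => fderiv ℝ (fun z => h z β) y (Pi.single j 1)) x (Pi.single i 1)

/-- Assumption (CH): `0` lies in the interior of the convex hull of the range of `h`. -/
def AssumptionCH {m d : ℕ} (h : (Fin m → ℝ) → Fin d → ℝ) : Prop :=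
  (0 : Fin d → ℝ) ∈ interior (convexHull ℝ (Set.range h))

/-- Assumption (D1): `h ∈ C³` and the Jacobian is Lipschitz with modulus `κ₁`. -/
def AssumptionD1 {m d : ℕ} (h : (Fin m → ℝ) → Fin d → ℝ) (κ₁ : (Fin m → ℝ) → ℝ) : Prop :=
  ContDiff ℝ 3 h ∧ (∀ x, 0 ≤ κ₁ x) ∧
    ∀ (x Δ : Fin m → ℝ) (ζ : Fin d → ℝ),
      enorm2 (fun γ => ∑ β, ζ β * (jac h (x + Δ) β γ - jac h x β γ)) ≤
        κ₁ x * enorm2 Δ * enorm2 ζ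

/-- Assumption (D2): the Hessians are locally Lipschitz with modulus `κ₂` at scale `δ̂`. -/
def AssumptionD2 {m d : ℕ} (h : (Fin m → ℝ) → Fin d → ℝ) (κ₂ : (Fin m → ℝ) → ℝ)
    (δhat : ℝ) : Prop :=
  0 < δhat ∧ (∀ x, 0 ≤ κ₂ x) ∧
    ∀ (x Δ : Fin m → ℝ) (ζ : Fin d → ℝ), enorm2 Δ ≤ δhat →
      opNorm2 (∑ β, ζ β • (hess h β (x + Δ) - hess h β x)) ≤ κ₂ x * enorm2 Δ * enorm2 ζ

/-- Optimal transport cost with ground cost `c(x̄,x) = ‖x̄ - x‖_Σ²`. -/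
def otCost {m : ℕ} (S : Matrix (Fin m) (Fin m) ℝ) (Q P : Measure (Fin m → ℝ)) : ℝ≥0∞ :=
  ⨅ (π : Measure ((Fin m → ℝ) × (Fin m → ℝ))) (_ : IsProbabilityMeasure π)
    (_ : π.map Prod.fst = Q) (_ : π.map Prod.snd = P),
    ∫⁻ p, ENNReal.ofReal (mahal S (p.1 - p.2)) ∂π

/-- The empirical measure of the sample `X₁, …, X_n`. -/
def empMeas {m n : ℕ} (X : Fin n → Fin m → ℝ) : Measure (Fin m → ℝ) :=
  (n : ℝ≥0∞)⁻¹ • ∑ i, Measure.dirac (X i)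

/-- The Wasserstein projection value `R_n(h)`. -/
def Rn {m d n : ℕ} (S : Matrix (Fin m) (Fin m) ℝ) (h : (Fin m → ℝ) → Fin d → ℝ)
    (X : Fin n → Fin m → ℝ) : ℝ≥0∞ :=
  ⨅ (P : Measure (Fin m → ℝ)) (_ : IsProbabilityMeasure P) (_ : Integrable h P)
    (_ : (∫ x, h x ∂P) = 0), otCost S (empMeas X) P

/-- The inner objective `ζᵀ ∫₀¹ Dh(Xᵢ + n^{-1/2}Δu)Δ du − ‖Δ‖_Σ²`. -/
def innerObj {m d : ℕ} (S : Matrix (Fin m) (Fin m) ℝ) (h : (Fin m → ℝ) → Fin d → ℝ)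
    (n : ℕ) (Xi : Fin m → ℝ) (ζ : Fin d → ℝ) (Δ : Fin m → ℝ) : ℝ :=
  (∫ u in (0:ℝ)..1, ζ ⬝ᵥ (jac h (Xi + ((Real.sqrt n)⁻¹ * u) • Δ)).mulVec Δ) - mahal S Δ

/-- The dual function `M_n(ζ)`, with values in `[0,∞]`. -/
def Mn {m d n : ℕ} (S : Matrix (Fin m) (Fin m) ℝ) (h : (Fin m → ℝ) → Fin d → ℝ)
    (X : Fin n → Fin m → ℝ) (ζ : Fin d → ℝ) : ℝ≥0∞ :=
  (n : ℝ≥0∞)⁻¹ * ∑ i, ⨆ Δ : Fin m → ℝ, ENNReal.ofReal (innerObj S h n (X i) ζ Δ)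

/-- `H_n = n^{-1/2} ∑ᵢ h(Xᵢ)`. -/
def Hn {m d n : ℕ} (h : (Fin m → ℝ) → Fin d → ℝ) (X : Fin n → Fin m → ℝ) : Fin d → ℝ :=
  (Real.sqrt n)⁻¹ • ∑ i, h (X i)

/-- `𝒱_n = n⁻¹ ∑ᵢ Dh(Xᵢ) Σ Dh(Xᵢ)ᵀ`. -/
def Vn {m d n : ℕ} (S : Matrix (Fin m) (Fin m) ℝ) (h : (Fin m → ℝ) → Fin d → ℝ)
    (X : Fin n → Fin m → ℝ) : Matrix (Fin d) (Fin d) ℝ :=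
  (n : ℝ)⁻¹ • ∑ i, jac h (X i) * S * (jac h (X i))ᵀ

/-- `𝒲_n = n⁻¹ ∑ᵢ h(Xᵢ) h(Xᵢ)ᵀ`. -/
def Wn {m d n : ℕ} (h : (Fin m → ℝ) → Fin d → ℝ) (X : Fin n → Fin m → ℝ) :
    Matrix (Fin d) (Fin d) ℝ :=
  (n : ℝ)⁻¹ • ∑ i, Matrix.vecMulVec (h (X i)) (h (X i))

/-- Entry of the tensor `Dh^β(x) Σ D²h^γ(x) Σ Dh^ω(x)ᵀ`. -/
def KnE {m d : ℕ} (S : Matrix (Fin m) (Fin m) ℝ) (h : (Fin m → ℝ) → Fin d → ℝ)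
    (x : Fin m → ℝ) (β γ ω : Fin d) : ℝ :=
  jac h x β ⬝ᵥ S.mulVec ((hess h γ x).mulVec (S.mulVec (jac h x ω)))

/-- The tensor `𝒦_n`. -/
def Kn {m d n : ℕ} (S : Matrix (Fin m) (Fin m) ℝ) (h : (Fin m → ℝ) → Fin d → ℝ)
    (X : Fin n → Fin m → ℝ) (β γ ω : Fin d) : ℝ :=
  (n : ℝ)⁻¹ * ∑ i, KnE S h (X i) β γ ω

/-- `ξ_n = 𝒱_n⁻¹ H_n`. -/
def xin {m d n : ℕ} (S : Matrix (Fin m) (Fin m) ℝ) (h : (Fin m → ℝ) → Fin d → ℝ)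
    (X : Fin n → Fin m → ℝ) : Fin d → ℝ :=
  ((Vn S h X)⁻¹).mulVec (Hn h X)

/-- The quadratic term `⟨𝒱_n, ξ_n^{⊗2}⟩`. -/
def quadTerm {m d n : ℕ} (S : Matrix (Fin m) (Fin m) ℝ) (h : (Fin m → ℝ) → Fin d → ℝ)
    (X : Fin n → Fin m → ℝ) : ℝ :=
  xin S h X ⬝ᵥ (Vn S h X).mulVec (xin S h X)

/-- The cubic term `⟨𝒦_n, ξ_n^{⊗3}⟩`. -/
def cubTerm {m d n : ℕ} (S : Matrix (Fin m) (Fin m) ℝ) (h : (Fin m → ℝ) → Fin d → ℝ)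
    (X : Fin n → Fin m → ℝ) : ℝ :=
  ∑ β, ∑ γ, ∑ ω, Kn S h X β γ ω * xin S h X β * xin S h X γ * xin S h X ω

/-- The cubic form `L_n(ζ)`. -/
def Ln {m d n : ℕ} (S : Matrix (Fin m) (Fin m) ℝ) (h : (Fin m → ℝ) → Fin d → ℝ)
    (X : Fin n → Fin m → ℝ) (ζ : Fin d → ℝ) : ℝ :=
  (1/8) * ∑ β, ∑ γ, ∑ ω, ζ β * ζ γ * ζ ω * Kn S h X β γ ω

/-- `F_n(ζ) = ¼ ζᵀ𝒱_nζ + n^{-1/2} L_n(ζ)`. -/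
def Fn {m d n : ℕ} (S : Matrix (Fin m) (Fin m) ℝ) (h : (Fin m → ℝ) → Fin d → ℝ)
    (X : Fin n → Fin m → ℝ) (ζ : Fin d → ℝ) : ℝ :=
  (1/4) * (ζ ⬝ᵥ (Vn S h X).mulVec ζ) + (Real.sqrt n)⁻¹ * Ln S h X ζ

/-- The gradient `∇L_n(ζ)`. -/
def gradLn {m d n : ℕ} (S : Matrix (Fin m) (Fin m) ℝ) (h : (Fin m → ℝ) → Fin d → ℝ)
    (X : Fin n → Fin m → ℝ) (ζ : Fin d → ℝ) : Fin d → ℝ :=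
  fun β => fderiv ℝ (Ln S h X) ζ (Pi.single β 1)

/-- The population matrix `V = E[Dh(X) Σ Dh(X)ᵀ]`. -/
def VP {m d : ℕ} (S : Matrix (Fin m) (Fin m) ℝ) (h : (Fin m → ℝ) → Fin d → ℝ)
    (P : Measure (Fin m → ℝ)) : Matrix (Fin d) (Fin d) ℝ :=
  Matrix.of fun β γ => ∫ x, (jac h x * S * (jac h x)ᵀ) β γ ∂P

/-- The population matrix `W = E[h(X) h(X)ᵀ]`. -/
def WP {m d : ℕ} (h : (Fin m → ℝ) → Fin d → ℝ) (P : Measure (Fin m → ℝ)) :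
    Matrix (Fin d) (Fin d) ℝ :=
  Matrix.of fun β γ => ∫ x, h x β * h x γ ∂P

/-- `E[‖Dh(X)‖₂² κ₁(X)]`. -/
def momA {m d : ℕ} (h : (Fin m → ℝ) → Fin d → ℝ) (κ₁ : (Fin m → ℝ) → ℝ)
    (P : Measure (Fin m → ℝ)) : ℝ := ∫ x, opNorm2 (jac h x) ^ 2 * κ₁ x ∂P

/-- `E[‖Dh(X)‖₂² κ₁(X)²]`. -/
def momB {m d : ℕ} (h : (Fin m → ℝ) → Fin d → ℝ) (κ₁ : (Fin m → ℝ) → ℝ)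
    (P : Measure (Fin m → ℝ)) : ℝ := ∫ x, opNorm2 (jac h x) ^ 2 * κ₁ x ^ 2 ∂P

/-- `E[‖Dh(X)‖₂³ κ₂(X)]`. -/
def momC {m d : ℕ} (h : (Fin m → ℝ) → Fin d → ℝ) (κ₂ : (Fin m → ℝ) → ℝ)
    (P : Measure (Fin m → ℝ)) : ℝ := ∫ x, opNorm2 (jac h x) ^ 3 * κ₂ x ∂P

/-- `E[‖Dh(X)‖₂³ κ₁(X) κ₂(X)]`. -/
def momD {m d : ℕ} (h : (Fin m → ℝ) → Fin d → ℝ) (κ₁ κ₂ : (Fin m → ℝ) → ℝ)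
    (P : Measure (Fin m → ℝ)) : ℝ := ∫ x, opNorm2 (jac h x) ^ 3 * κ₁ x * κ₂ x ∂P

/-- `E[‖Dh(X)‖₂² κ₁(X)³]`. -/
def momE {m d : ℕ} (h : (Fin m → ℝ) → Fin d → ℝ) (κ₁ : (Fin m → ℝ) → ℝ)
    (P : Measure (Fin m → ℝ)) : ℝ := ∫ x, opNorm2 (jac h x) ^ 2 * κ₁ x ^ 3 ∂P

/-- `E[‖Dh(X)‖₂³ κ₁(X)² κ₂(X)]`. -/
def momF {m d : ℕ} (h : (Fin m → ℝ) → Fin d → ℝ) (κ₁ κ₂ : (Fin m → ℝ) → ℝ)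
    (P : Measure (Fin m → ℝ)) : ℝ := ∫ x, opNorm2 (jac h x) ^ 3 * κ₁ x ^ 2 * κ₂ x ∂P

/-- Condition A on the sample. -/
def CondA {m d n : ℕ} (S : Matrix (Fin m) (Fin m) ℝ) (h : (Fin m → ℝ) → Fin d → ℝ)
    (κ₁ κ₂ : (Fin m → ℝ) → ℝ) (P : Measure (Fin m → ℝ)) (X : Fin n → Fin m → ℝ) : Prop :=
  (2⁻¹ * sigmaMin (VP S h P) ≤ sigmaMin (Vn S h X)) ∧
  (enorm2 (Hn h X) ≤ 2 * Real.sqrt (Real.log n)) ∧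
  (∀ i, opNorm2 (jac h (X i)) ≤ (n : ℝ) ^ ((1 : ℝ)/4)) ∧
  (∀ i, κ₁ (X i) ≤ (n : ℝ) ^ ((1 : ℝ)/4)) ∧
  (|(n : ℝ)⁻¹ * ∑ i, opNorm2 (jac h (X i)) ^ 2 * κ₁ (X i)| ≤ 1 + momA h κ₁ P) ∧
  (|(n : ℝ)⁻¹ * ∑ i, opNorm2 (jac h (X i)) ^ 2 * κ₁ (X i) ^ 2| ≤ 1 + momB h κ₁ P) ∧
  (|(n : ℝ)⁻¹ * ∑ i, opNorm2 (jac h (X i)) ^ 3 * κ₂ (X i)| ≤ 1 + momC h κ₂ P) ∧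
  (|(n : ℝ)⁻¹ * ∑ i, opNorm2 (jac h (X i)) ^ 3 * κ₁ (X i) * κ₂ (X i)|
      ≤ Real.sqrt n + momD h κ₁ κ₂ P) ∧
  (|(n : ℝ)⁻¹ * ∑ i, opNorm2 (jac h (X i)) ^ 2 * κ₁ (X i) ^ 3| ≤ Real.sqrt n + momE h κ₁ P) ∧
  (|(n : ℝ)⁻¹ * ∑ i, opNorm2 (jac h (X i)) ^ 3 * κ₁ (X i) ^ 2 * κ₂ (X i)|
      ≤ (n : ℝ) + momF h κ₁ κ₂ P)

open Classical in
/-- The principal square root of a positive semidefinite matrix (junk value `0` otherwise). -/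
def matSqrt {k : ℕ} (A : Matrix (Fin k) (Fin k) ℝ) : Matrix (Fin k) (Fin k) ℝ :=
  if hA : A.PosSemidef then
    (hA.1.eigenvectorUnitary : Matrix (Fin k) (Fin k) ℝ) *
      diagonal ((↑) ∘ (Real.sqrt ·) ∘ hA.1.eigenvalues) *
      (star (hA.1.eigenvectorUnitary : Matrix (Fin k) (Fin k) ℝ))
  else 0

/-- The standard Gaussian density on `ℝ^d`. -/
def gaussDensity (d : ℕ) (v : Fin d → ℝ) : ℝ :=
  (2 * Real.pi) ^ (-(d : ℝ)/2) * Real.exp (-(∑ i, v i ^ 2)/2)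

/-- `F_{W,V}(z) = ∫_{vᵀW^{1/2}V⁻¹W^{1/2}v ≤ z} φ(v) dv`. -/
def FWV {d : ℕ} (W V : Matrix (Fin d) (Fin d) ℝ) (z : ℝ) : ℝ :=
  ∫ v in {v : Fin d → ℝ | v ⬝ᵥ (matSqrt W * V⁻¹ * matSqrt W).mulVec v ≤ z}, gaussDensity d v

/-- The `(1-α)`-quantile `z_{W,V} = F_{W,V}⁻¹(1-α)`. -/
def zQuantile {d : ℕ} (α : ℝ) (W V : Matrix (Fin d) (Fin d) ℝ) : ℝ :=
  sInf {z : ℝ | 0 < z ∧ 1 - α ≤ FWV W V z}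

/-- The Frobenius inner product of two square matrices. -/
def frob {k : ℕ} (A B : Matrix (Fin k) (Fin k) ℝ) : ℝ := ∑ i, ∑ j, A i j * B i j

/-- The matrix exponential (defined entrywise by the exponential series). -/
def matExp {k : ℕ} (A : Matrix (Fin k) (Fin k) ℝ) : Matrix (Fin k) (Fin k) ℝ :=
  Matrix.of fun i j => ∑' t : ℕ, (t.factorial : ℝ)⁻¹ * (A ^ t) i j

/-- The matrix `L_{W,V}`. -/
def LWV {d : ℕ} (α : ℝ) (W V : Matrix (Fin d) (Fin d) ℝ) : Matrix (Fin d) (Fin d) ℝ :=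
  Matrix.of fun j k =>
    ∫ v in {v : Fin d → ℝ | ∑ i, v i ^ 2 ≤ zQuantile α W V},
      (2 * Real.pi) ^ (-(d : ℝ)/2) *
        Real.exp (-(v ⬝ᵥ (matSqrt V * W⁻¹ * matSqrt V).mulVec v)/2) *
        Real.sqrt (matSqrt V * W⁻¹ * matSqrt V).det *
        (-(1/2) * (v j * v k) + (1/2) * ((matSqrt V)⁻¹ * W * (matSqrt V)⁻¹) j k)

/-- The differential `d(V^{1/2} W⁻¹ V^{1/2})` in the directions `(dW, dV)`. -/
def PhiDiff {d : ℕ} (W V dW dV : Matrix (Fin d) (Fin d) ℝ) : Matrix (Fin d) (Fin d) ℝ :=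
  (Matrix.of fun i j => ∫ s in Set.Ioi (0:ℝ),
      (matExp (-(s • matSqrt V)) * dV * matExp (-(s • matSqrt V))) i j) * W⁻¹ * matSqrt V
  - matSqrt V * W⁻¹ * dW * W⁻¹ * matSqrt V
  + matSqrt V * W⁻¹ *
    (Matrix.of fun i j => ∫ s in Set.Ioi (0:ℝ),
      (matExp (-(s • matSqrt V)) * dV * matExp (-(s • matSqrt V))) i j)

/-- The linear functional `𝓛_{W,V}(dW, dV)`. -/
def calL {d : ℕ} (α : ℝ) (W V dW dV : Matrix (Fin d) (Fin d) ℝ) : ℝ :=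
  frob (LWV α W V) (PhiDiff W V dW dV) / frob (LWV α W V) (matSqrt V * W⁻¹ * matSqrt V)

/-- The total variation distance between two measures. -/
def tvDist {α : Type*} [MeasurableSpace α] (P Q : Measure α) : ℝ :=
  sSup {r : ℝ | ∃ s : Set α, MeasurableSet s ∧ r = |(P s).toReal - (Q s).toReal|}

/-- `sup_{‖t‖₂ ≥ b} |∫ exp(i tᵀ y) dP(y)|`. -/
def charAbsSup {d : ℕ} (P : Measure (Fin d → ℝ)) (b : ℝ) : ℝ :=
  sSup {r : ℝ | ∃ t : Fin d → ℝ, b ≤ enorm2 t ∧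
    r = ‖(∫ y, Complex.exp (Complex.I * ((t ⬝ᵥ y : ℝ) : ℂ)) ∂P)‖}

/-- Cramér's condition for a measure on `ℝ^d`. -/
def CramerCond {d : ℕ} (P : Measure (Fin d → ℝ)) : Prop :=
  ∀ b : ℝ, 0 < b → charAbsSup P b < 1

/-- Entrywise mean `E[A]` of a matrix-valued law. -/
def matMean {k : ℕ} (ν : Measure (Fin k → Fin k → ℝ)) : Matrix (Fin k) (Fin k) ℝ :=
  Matrix.of fun i j => ∫ x, x i j ∂ν

/-- Entrywise mean `E[(A - E[A])²]` of a matrix-valued law. -/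
def matVar {k : ℕ} (ν : Measure (Fin k → Fin k → ℝ)) : Matrix (Fin k) (Fin k) ℝ :=
  Matrix.of fun i j => ∫ x, ((Matrix.of x - matMean ν) * (Matrix.of x - matMean ν)) i j ∂ν

/-!
Both bounds reduce to a trilinear estimate for the tensor `𝒦_n`:
`|∑ a_β b_γ c_ω 𝒦_n^{βγω}| ≤ ‖Σ‖² (n⁻¹ ∑ᵢ ‖Dh(Xᵢ)‖² κ₁(Xᵢ)) ‖a‖ ‖b‖ ‖c‖`.
At a single point `x` the contraction equals `(Dhᵀa)ᵀ Σ M_b Σ (Dhᵀc)` with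
`M_b = ∑ b_γ D²h^γ(x)`, and `‖M_b‖ ≤ κ₁(x) ‖b‖` because `M_bᵀ Δ` is the derivative at `t = 0`
of `t ↦ ∑ b_β (Dh^β(x + tΔ) - Dh^β(x))`, which (D1) bounds by `κ₁(x) ‖b‖ ‖Δ‖ t`.
For the gradient, `⟨∇L_n(ζ), v⟩` is `1/8` times the sum of the three contractions of `𝒦_n`
with one slot filled by `v` and the other two by `ζ`.
-/

open scoped Matrix.Norms.L2Operator

section Norms

variable {k a b : ℕ}

lemma enorm2_eq_norm (v : Fin k → ℝ) : enorm2 v = ‖WithLp.toLp 2 v‖ := by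
  simp [enorm2, EuclideanSpace.norm_eq]

lemma enorm2_nonneg (v : Fin k → ℝ) : 0 ≤ enorm2 v := Real.sqrt_nonneg _

lemma enorm2_smul (c : ℝ) (v : Fin k → ℝ) : enorm2 (c • v) = |c| * enorm2 v := by
  rw [enorm2_eq_norm, enorm2_eq_norm, WithLp.toLp_smul, norm_smul, Real.norm_eq_abs]

lemma enorm2_sq (v : Fin k → ℝ) : enorm2 v ^ 2 = v ⬝ᵥ v := by
  rw [enorm2, Real.sq_sqrt (by positivity)]
  simp [dotProduct, sq]

lemma abs_dotProduct_le (v w : Fin k → ℝ) : |v ⬝ᵥ w| ≤ enorm2 v * enorm2 w := by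
  rw [enorm2_eq_norm, enorm2_eq_norm]
  convert abs_real_inner_le_norm (WithLp.toLp 2 v : EuclideanSpace ℝ (Fin k)) (WithLp.toLp 2 w)
    using 2
  simp [dotProduct, PiLp.inner_apply, mul_comm]

lemma enorm2_le_of_dotProduct_le {g : Fin k → ℝ} {B : ℝ} (hB : 0 ≤ B)
    (hg : ∀ v, g ⬝ᵥ v ≤ B * enorm2 v) : enorm2 g ≤ B := by
  have hgg := hg g
  rw [← enorm2_sq] at hgg
  nlinarith [enorm2_nonneg g]

-- This includes `b = 0`, where the unit sphere is empty and both sides are `0`.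
lemma opNorm2_eq_l2_opNorm (A : Matrix (Fin a) (Fin b) ℝ) : opNorm2 A = ‖A‖ := by
  rw [Matrix.l2_opNorm_def, ← ContinuousLinearMap.sSup_sphere_eq_norm, opNorm2]
  congr 1
  ext r
  simp only [Set.mem_ofPred_eq, Set.mem_image, mem_sphere_iff_norm]
  constructor
  · rintro ⟨v, hv, rfl⟩
    refine ⟨WithLp.toLp 2 v, ?_, ?_⟩ <;> simp_all [enorm2_eq_norm]
  · rintro ⟨v, hv, rfl⟩
    refine ⟨v.ofLp, ?_, ?_⟩ <;> simp_all [enorm2_eq_norm, Matrix.toLpLin_apply]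

lemma enorm2_mulVec_le (A : Matrix (Fin a) (Fin b) ℝ) (v : Fin b → ℝ) :
    enorm2 (A *ᵥ v) ≤ ‖A‖ * enorm2 v := by
  simpa [enorm2_eq_norm] using A.l2_opNorm_mulVec (WithLp.toLp 2 v)

lemma abs_dotProduct_mulVec_le (u : Fin a → ℝ) (A : Matrix (Fin a) (Fin b) ℝ) (w : Fin b → ℝ) :
    |u ⬝ᵥ A *ᵥ w| ≤ enorm2 u * ‖A‖ * enorm2 w :=
  (abs_dotProduct_le u _).trans <| by
    rw [mul_assoc]
    exact mul_le_mul_of_nonneg_left (enorm2_mulVec_le A w) (enorm2_nonneg u)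

lemma l2_opNorm_le_of_enorm2_mulVec_le {A : Matrix (Fin a) (Fin b) ℝ} {C : ℝ} (hC : 0 ≤ C)
    (hA : ∀ v, enorm2 (A *ᵥ v) ≤ C * enorm2 v) : ‖A‖ ≤ C := by
  rw [Matrix.l2_opNorm_def]
  refine ContinuousLinearMap.opNorm_le_bound _ hC fun v => ?_
  simpa [enorm2_eq_norm, Matrix.toLpLin_apply] using hA v.ofLp

lemma l2_opNorm_transpose (A : Matrix (Fin a) (Fin b) ℝ) : ‖Aᵀ‖ = ‖A‖ := by
  simpa using A.l2_opNorm_conjTranspose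

end Norms

lemma apply_eq_sum_smul_apply_single {ι F : Type*} [Fintype ι] [DecidableEq ι]
    [AddCommGroup F] [Module ℝ F] [TopologicalSpace F]
    (L : (ι → ℝ) →L[ℝ] F) (v : ι → ℝ) : L v = ∑ i, v i • L (Pi.single i 1) := by
  conv_lhs => rw [← Finset.univ_sum_single v]
  refine (map_sum _ _ _).trans (Finset.sum_congr rfl fun i _ => ?_)
  rw [← map_smul, ← Pi.single_smul', smul_eq_mul, mul_one]

lemma norm_le_of_hasDerivAt_of_norm_sub_le {E : Type*} [NormedAddCommGroup E] [NormedSpace ℝ E]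
    {f : ℝ → E} {f' : E} {C : ℝ} (hf : HasDerivAt f f' 0)
    (hC : ∀ t > 0, ‖f t - f 0‖ ≤ C * t) : ‖f'‖ ≤ C := by
  have hslope : Tendsto (slope f 0) (𝓝[>] 0) (𝓝 f') :=
    (hasDerivWithinAt_iff_tendsto_slope' (lt_irrefl 0)).mp hf.hasDerivWithinAt
  refine le_of_tendsto hslope.norm (eventually_nhdsWithin_of_forall fun t (ht : 0 < t) => ?_)
  rw [slope_def_module, sub_zero, norm_smul, norm_inv, Real.norm_of_nonneg ht.le]
  exact (inv_mul_le_iff₀ ht).mpr ((hC t ht).trans_eq (mul_comm _ _))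

section Hessian

variable {m d : ℕ} {h : (Fin m → ℝ) → Fin d → ℝ}

lemma jac_apply_eq_fderiv {x : Fin m → ℝ} (hx : DifferentiableAt ℝ h x) (β : Fin d) (j : Fin m) :
    jac h x β j = fderiv ℝ (fun z => h z β) x (Pi.single j 1) := by
  rw [fderiv_apply hx]
  rfl

lemma hasDerivAt_jac_line (hh : ContDiff ℝ 2 h) (x Δ : Fin m → ℝ) (β : Fin d) (j : Fin m) :
    HasDerivAt (fun t : ℝ => jac h (x + t • Δ) β j) (∑ i, Δ i * hess h β x i j) 0 := by
  set g : (Fin m → ℝ) → ℝ := fun y => fderiv ℝ (fun z => h z β) y (Pi.single j 1)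
  have hg : Differentiable ℝ g :=
    (((contDiff_pi.mp hh β).fderiv_right (m := 1) (by norm_num)).clm_apply
      contDiff_const).differentiable one_ne_zero
  have hline : HasDerivAt (fun t : ℝ => x + t • Δ) Δ 0 := by
    simpa using ((hasDerivAt_id (0 : ℝ)).smul_const Δ).const_add x
  have hderiv : fderiv ℝ g x Δ = ∑ i, Δ i * hess h β x i j :=
    apply_eq_sum_smul_apply_single _ Δ
  have := (hg (x + (0 : ℝ) • Δ)).hasFDerivAt.comp_hasDerivAt (0 : ℝ) hline
  rw [zero_smul, add_zero, hderiv] at this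
  refine this.congr_of_eventuallyEq (Eventually.of_forall fun t => ?_)
  exact jac_apply_eq_fderiv (hh.differentiable (by norm_num) _) β j

variable {κ₁ : (Fin m → ℝ) → ℝ}

lemma l2_opNorm_sum_smul_hess_le (hD1 : AssumptionD1 h κ₁) (x : Fin m → ℝ) (ζ : Fin d → ℝ) :
    ‖∑ γ, ζ γ • hess h γ x‖ ≤ κ₁ x * enorm2 ζ := by
  obtain ⟨hh, hκ, hlip⟩ := hD1
  rw [← l2_opNorm_transpose]
  refine l2_opNorm_le_of_enorm2_mulVec_le (mul_nonneg (hκ x) (enorm2_nonneg ζ)) fun Δ => ?_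
  set φ : ℝ → Fin m → ℝ := fun t j => ∑ β, ζ β * (jac h (x + t • Δ) β j - jac h x β j)
  have hφ : HasDerivAt φ ((∑ γ, ζ γ • hess h γ x)ᵀ *ᵥ Δ) 0 := by
    refine hasDerivAt_pi.mpr fun j => ?_
    convert HasDerivAt.fun_sum fun β _ =>
      ((hasDerivAt_jac_line (hh.of_le (by norm_num)) x Δ β j).sub_const
        (jac h x β j)).const_mul (ζ β) using 1
    simp only [mulVec, dotProduct, transpose_apply, Matrix.sum_apply, Matrix.smul_apply,
      smul_eq_mul, Finset.mul_sum, Finset.sum_mul]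
    rw [Finset.sum_comm]
    exact Finset.sum_congr rfl fun _ _ => Finset.sum_congr rfl fun _ _ => by ring
  set f : ℝ → EuclideanSpace ℝ (Fin m) := fun t => WithLp.toLp 2 (φ t)
  have hf : HasDerivAt f (WithLp.toLp 2 ((∑ γ, ζ γ • hess h γ x)ᵀ *ᵥ Δ)) 0 :=
    (PiLp.hasFDerivAt_toLp (𝕜 := ℝ) 2 _).comp_hasDerivAt (0 : ℝ) hφ
  have hbound : ∀ t > 0, ‖f t - f 0‖ ≤ κ₁ x * enorm2 ζ * enorm2 Δ * t := by
    intro t ht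
    have hf0 : f 0 = 0 := by ext j; simp [f, φ]
    rw [hf0, sub_zero, ← enorm2_eq_norm]
    calc _ ≤ κ₁ x * enorm2 (t • Δ) * enorm2 ζ := hlip x (t • Δ) ζ
      _ = κ₁ x * enorm2 ζ * enorm2 Δ * t := by
        rw [enorm2_smul, abs_of_pos ht]; ring
  simpa [enorm2_eq_norm] using norm_le_of_hasDerivAt_of_norm_sub_le hf hbound

end Hessian

section Trilinear

variable {ι : Type*} [Fintype ι]

def trilinForm (K : ι → ι → ι → ℝ) (a b c : ι → ℝ) : ℝ :=
  ∑ β, ∑ γ, ∑ ω, a β * b γ * c ω * K β γ ω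

lemma differentiable_trilinForm_diag (K : ι → ι → ι → ℝ) :
    Differentiable ℝ fun z => trilinForm K z z z := by
  unfold trilinForm
  fun_prop

lemma fderiv_trilinForm_diag (K : ι → ι → ι → ℝ) (ζ v : ι → ℝ) :
    fderiv ℝ (fun z => trilinForm K z z z) ζ v =
      trilinForm K v ζ ζ + trilinForm K ζ v ζ + trilinForm K ζ ζ v := by
  have hd : HasFDerivAt (fun z => trilinForm K z z z) _ ζ :=
    HasFDerivAt.fun_sum (u := Finset.univ) fun β _ =>
      HasFDerivAt.fun_sum (u := Finset.univ) fun γ _ => HasFDerivAt.fun_sum (u := Finset.univ)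
        fun ω _ => ((((hasFDerivAt_apply β ζ).fun_mul (hasFDerivAt_apply γ ζ)).fun_mul
          (hasFDerivAt_apply ω ζ)).mul_const (K β γ ω) : HasFDerivAt (𝕜 := ℝ) _ _ ζ)
  rw [hd.fderiv]
  simp only [trilinForm, ← Finset.sum_add_distrib, FunLike.coe_sum, Finset.sum_apply]
  refine Finset.sum_congr rfl fun β _ => Finset.sum_congr rfl fun γ _ =>
    Finset.sum_congr rfl fun ω _ => ?_
  simp only [smul_add, _root_.add_apply, _root_.smul_apply, ContinuousLinearMap.proj_apply,
    smul_eq_mul]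
  ring

lemma trilinForm_const_mul_sum {κ : Type*} (s : Finset κ) (r : ℝ) (K : κ → ι → ι → ι → ℝ)
    (a b c : ι → ℝ) :
    trilinForm (fun β γ ω => r * ∑ i ∈ s, K i β γ ω) a b c =
      r * ∑ i ∈ s, trilinForm (K i) a b c := by
  simp only [trilinForm, Finset.mul_sum]
  symm
  rw [Finset.sum_comm (s := s)]
  refine Finset.sum_congr rfl fun β _ => ?_
  rw [Finset.sum_comm (s := s)]
  refine Finset.sum_congr rfl fun γ _ => ?_
  rw [Finset.sum_comm (s := s)]
  exact Finset.sum_congr rfl fun ω _ => Finset.sum_congr rfl fun i _ => by ring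

end Trilinear

section Contraction

variable {m d : ℕ} {h : (Fin m → ℝ) → Fin d → ℝ} {κ₁ : (Fin m → ℝ) → ℝ}

lemma trilinForm_KnE (S : Matrix (Fin m) (Fin m) ℝ) (x : Fin m → ℝ) (a b c : Fin d → ℝ) :
    trilinForm (KnE S h x) a b c =
      ((jac h x)ᵀ *ᵥ a) ⬝ᵥ (S * (∑ γ, b γ • hess h γ x) * S) *ᵥ ((jac h x)ᵀ *ᵥ c) := by
  simp only [← mulVec_mulVec, mulVec_transpose, vecMul_eq_sum, sum_mulVec, mulVec_sum,
    smul_mulVec, mulVec_smul, sum_dotProduct, dotProduct_sum, smul_dotProduct, dotProduct_smul,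
    smul_eq_mul, Finset.mul_sum, trilinForm, KnE]
  symm
  rw [Finset.sum_comm]
  refine (Finset.sum_congr rfl fun γ _ => Finset.sum_comm).trans ?_
  rw [Finset.sum_comm]
  exact Finset.sum_congr rfl fun β _ => Finset.sum_congr rfl fun γ _ =>
    Finset.sum_congr rfl fun ω _ => by ring

lemma abs_trilinForm_KnE_le (hD1 : AssumptionD1 h κ₁) (S : Matrix (Fin m) (Fin m) ℝ)
    (x : Fin m → ℝ) (a b c : Fin d → ℝ) :
    |trilinForm (KnE S h x) a b c| ≤
      ‖S‖ ^ 2 * (‖jac h x‖ ^ 2 * κ₁ x) * (enorm2 a * enorm2 b * enorm2 c) := by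
  set J := jac h x
  have hJ : ∀ v, enorm2 (Jᵀ *ᵥ v) ≤ ‖J‖ * enorm2 v := fun v =>
    (enorm2_mulVec_le _ v).trans_eq (by rw [l2_opNorm_transpose])
  have hSMS : ‖S * (∑ γ, b γ • hess h γ x) * S‖ ≤ ‖S‖ ^ 2 * (κ₁ x * enorm2 b) :=
    calc _ ≤ ‖S‖ * ‖∑ γ, b γ • hess h γ x‖ * ‖S‖ :=
          (l2_opNorm_mul _ _).trans (mul_le_mul_of_nonneg_right (l2_opNorm_mul _ _) (norm_nonneg _))
      _ ≤ ‖S‖ * (κ₁ x * enorm2 b) * ‖S‖ := by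
          gcongr
          exact l2_opNorm_sum_smul_hess_le hD1 x b
      _ = _ := by ring
  rw [trilinForm_KnE]
  calc _ ≤ enorm2 (Jᵀ *ᵥ a) * ‖S * (∑ γ, b γ • hess h γ x) * S‖ * enorm2 (Jᵀ *ᵥ c) :=
        abs_dotProduct_mulVec_le _ _ _
    _ ≤ (‖J‖ * enorm2 a) * (‖S‖ ^ 2 * (κ₁ x * enorm2 b)) * (‖J‖ * enorm2 c) := by
        have := enorm2_nonneg a
        have := hD1.2.1 x
        have := enorm2_nonneg b
        gcongr
        exacts [enorm2_nonneg _, hJ a, hJ c]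
    _ = _ := by ring

lemma abs_trilinForm_Kn_le (hD1 : AssumptionD1 h κ₁) (S : Matrix (Fin m) (Fin m) ℝ) {n : ℕ}
    (X : Fin n → Fin m → ℝ) (a b c : Fin d → ℝ) :
    |trilinForm (Kn S h X) a b c| ≤ ‖S‖ ^ 2 *
      ((n : ℝ)⁻¹ * ∑ i, ‖jac h (X i)‖ ^ 2 * κ₁ (X i)) * (enorm2 a * enorm2 b * enorm2 c) := by
  rw [show Kn S h X = fun β γ ω => (n : ℝ)⁻¹ * ∑ i, KnE S h (X i) β γ ω from rfl,
    trilinForm_const_mul_sum, abs_mul, abs_of_nonneg (by positivity)]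
  calc _ ≤ (n : ℝ)⁻¹ * ∑ i, ‖S‖ ^ 2 * (‖jac h (X i)‖ ^ 2 * κ₁ (X i)) *
        (enorm2 a * enorm2 b * enorm2 c) := by
        gcongr
        exact (Finset.abs_sum_le_sum_abs _ _).trans
          (Finset.sum_le_sum fun i _ => abs_trilinForm_KnE_le hD1 S (X i) a b c)
    _ = _ := by rw [← Finset.sum_mul, ← Finset.mul_sum]; ring

end Contraction

section Gradient

variable {m d n : ℕ}

lemma gradLn_dotProduct (S : Matrix (Fin m) (Fin m) ℝ) (h : (Fin m → ℝ) → Fin d → ℝ)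
    (X : Fin n → Fin m → ℝ) (ζ v : Fin d → ℝ) :
    gradLn S h X ζ ⬝ᵥ v = 1 / 8 * (trilinForm (Kn S h X) v ζ ζ + trilinForm (Kn S h X) ζ v ζ +
      trilinForm (Kn S h X) ζ ζ v) := by
  have hLn : Ln S h X = fun z => 1 / 8 * trilinForm (Kn S h X) z z z := rfl
  rw [← fderiv_trilinForm_diag, ← smul_eq_mul, ← _root_.smul_apply,
    ← fderiv_const_mul (differentiable_trilinForm_diag _ ζ), ← hLn,
    apply_eq_sum_smul_apply_single, dotProduct_comm]
  rfl

end Gradient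

theorem Ln_bounds_general
    (m d : ℕ)
    (S : Matrix (Fin m) (Fin m) ℝ)
    (h : (Fin m → ℝ) → Fin d → ℝ) (κ₁ : (Fin m → ℝ) → ℝ) (hD1 : AssumptionD1 h κ₁)
    (P : Measure (Fin m → ℝ))
    (n : ℕ) (X : Fin n → Fin m → ℝ)
    (hA4 : (n : ℝ)⁻¹ * ∑ i, opNorm2 (jac h (X i)) ^ 2 * κ₁ (X i) ≤ 1 + momA h κ₁ P) :
    ∀ ζ : Fin d → ℝ,
      |Ln S h X ζ| ≤ opNorm2 S ^ 2 * enorm2 ζ ^ 3 / 8 * (1 + momA h κ₁ P) ∧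
      enorm2 (gradLn S h X ζ) ≤ 3 * opNorm2 S ^ 2 * enorm2 ζ ^ 2 / 8 * (1 + momA h κ₁ P) := by
  intro ζ
  simp only [opNorm2_eq_l2_opNorm] at hA4 ⊢
  set C := 1 + momA h κ₁ P
  have hC : 0 ≤ C := le_trans (mul_nonneg (by positivity)
    (Finset.sum_nonneg fun i _ => mul_nonneg (sq_nonneg _) (hD1.2.1 _))) hA4
  have hK : ∀ a b c, |trilinForm (Kn S h X) a b c| ≤
      ‖S‖ ^ 2 * C * (enorm2 a * enorm2 b * enorm2 c) := fun a b c =>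
    (abs_trilinForm_Kn_le hD1 S X a b c).trans <| mul_le_mul_of_nonneg_right
      (mul_le_mul_of_nonneg_left hA4 (sq_nonneg _))
      (mul_nonneg (mul_nonneg (enorm2_nonneg a) (enorm2_nonneg b)) (enorm2_nonneg c))
  constructor
  · calc |Ln S h X ζ| = 1 / 8 * |trilinForm (Kn S h X) ζ ζ ζ| := by
          rw [Ln, abs_mul, abs_of_pos (by norm_num)]; rfl
      _ ≤ 1 / 8 * (‖S‖ ^ 2 * C * (enorm2 ζ * enorm2 ζ * enorm2 ζ)) := by gcongr; exact hK ζ ζ ζ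
      _ = _ := by ring
  · have := enorm2_nonneg ζ
    refine enorm2_le_of_dotProduct_le (by positivity) fun v => ?_
    rw [gradLn_dotProduct]
    have h₁ := (le_abs_self _).trans (hK v ζ ζ)
    have h₂ := (le_abs_self _).trans (hK ζ v ζ)
    have h₃ := (le_abs_self _).trans (hK ζ ζ v)
    linarith

/-- Bounds on the cubic form `L_n` and its gradient:
`|L_n(ζ)| ≤ (‖Σ‖₂²‖ζ‖₂³/8)(1 + E[‖Dh(X)‖₂²κ₁(X)])` and
`‖∇L_n(ζ)‖₂ ≤ (3‖Σ‖₂²‖ζ‖₂²/8)(1 + E[‖Dh(X)‖₂²κ₁(X)])`. -/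
theorem Ln_bounds
    (m d : ℕ) (hm : 1 ≤ m) (hd : 1 ≤ d)
    (S : Matrix (Fin m) (Fin m) ℝ) (hSsymm : S.IsSymm) (hSpd : S.PosDef)
    (h : (Fin m → ℝ) → Fin d → ℝ) (κ₁ : (Fin m → ℝ) → ℝ) (hD1 : AssumptionD1 h κ₁)
    (P : Measure (Fin m → ℝ)) (hP : IsProbabilityMeasure P)
    (n : ℕ) (hn : 1 ≤ n) (X : Fin n → Fin m → ℝ)
    (hA4 : (n : ℝ)⁻¹ * ∑ i, opNorm2 (jac h (X i)) ^ 2 * κ₁ (X i) ≤ 1 + momA h κ₁ P) :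
    ∀ ζ : Fin d → ℝ,
      |Ln S h X ζ| ≤ opNorm2 S ^ 2 * enorm2 ζ ^ 3 / 8 * (1 + momA h κ₁ P) ∧
      enorm2 (gradLn S h X ζ) ≤ 3 * opNorm2 S ^ 2 * enorm2 ζ ^ 2 / 8 * (1 + momA h κ₁ P) :=
  Ln_bounds_general m d S h κ₁ hD1 P n X hA4
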